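/- arXiv:1704.07218 — 3 statements merged into one kernel-verified Lean document; each statement's English description precedes it below -/
import Mathlib

section
/- Let n ≥ 3, ε > 0 and u_α(r) = ((r² + α²)/α)^((2-n)/2). If k > -n and n > k + 4, then there exist constants 0 < c ≤ C such that for all sufficiently small α > 0, c·α^(k+2) ≤ ∫₀^ε u_α(r)² r^(k+n-1) dr ≤ C·α^(k+2). -/
open MeasureTheory

/-- Lee–Parker calculus lemma, case `n > k + 4`: the integral
`∫₀^ε u_α(r)² r^(k+n-1) dr` is bounded above and below by constant multiples of
`α^(k+2)` for small `α`. -/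
theorem bubble_integral_asymptotics_case_lt
    (n : ℕ) (hn : 3 ≤ n) (ε : ℝ) (hε : 0 < ε) (k : ℝ) (hk : -(n : ℝ) < k)
    (hnk : k + 4 < (n : ℝ))
    (u : ℝ → ℝ → ℝ)
    (hu : ∀ α r, u α r = ((r ^ 2 + α ^ 2) / α) ^ ((2 - (n : ℝ)) / 2)) :
    ∃ c C : ℝ, 0 < c ∧ c ≤ C ∧ ∃ α₀ : ℝ, 0 < α₀ ∧ ∀ α : ℝ, 0 < α → α < α₀ →
      c * α ^ (k + 2) ≤ (∫ r in (0:ℝ)..ε, (u α r) ^ 2 * r ^ (k + n - 1)) ∧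
      (∫ r in (0:ℝ)..ε, (u α r) ^ 2 * r ^ (k + n - 1)) ≤ C * α ^ (k + 2) := by
  have hn3 : (3:ℝ) ≤ n := by exact_mod_cast hn
  have hkn : (0:ℝ) < k + n := by linarith
  have hnk4 : (0:ℝ) < n - k - 4 := by linarith
  have h2n : (2:ℝ) - n ≤ 0 := by linarith
  have hp : (-1:ℝ) < k + n - 1 := by linarith
  refine ⟨(2:ℝ) ^ ((2:ℝ) - n) / (k + n), 1 / (k + n) + 1 / ((n:ℝ) - k - 4), by positivity, ?_, ε, hε, ?_⟩
  · have h1 : (2:ℝ) ^ ((2:ℝ) - n) ≤ 1 := Real.rpow_le_one_of_one_le_of_nonpos one_le_two h2n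
    have : (2:ℝ) ^ ((2:ℝ) - n) / (k + n) ≤ 1 / (k + n) := by gcongr
    have h2 : (0:ℝ) ≤ 1 / ((n:ℝ) - k - 4) := by positivity
    linarith
  intro α hα hαε
  -- rewrite the integrand
  have key : ∀ r : ℝ, (u α r) ^ 2 * r ^ (k + n - 1)
      = ((r ^ 2 + α ^ 2) / α) ^ ((2:ℝ) - n) * r ^ (k + n - 1) := by
    intro r
    have hb : (0:ℝ) < (r ^ 2 + α ^ 2) / α := by positivity
    rw [hu, ← Real.rpow_natCast (_ ^ ((2 - (n:ℝ)) / 2)) 2, ← Real.rpow_mul hb.le]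
    norm_num
  have hInt : (∫ r in (0:ℝ)..ε, (u α r) ^ 2 * r ^ (k + n - 1))
      = ∫ r in (0:ℝ)..ε, ((r ^ 2 + α ^ 2) / α) ^ ((2:ℝ) - n) * r ^ (k + n - 1) := by
    exact intervalIntegral.integral_congr fun r _ => key r
  set F : ℝ → ℝ := fun r => ((r ^ 2 + α ^ 2) / α) ^ ((2:ℝ) - n) * r ^ (k + n - 1) with hF
  -- integrability on [0, ε]
  have hFmeas : Measurable F := by fun_prop
  have hgint : IntervalIntegrable (fun r : ℝ => α ^ ((2:ℝ) - n) * r ^ (k + n - 1))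
      volume 0 ε := (intervalIntegral.intervalIntegrable_rpow' hp).const_mul _
  have hFle : ∀ r : ℝ, 0 < r → F r ≤ α ^ ((2:ℝ) - n) * r ^ (k + n - 1) := by
    intro r hr
    have hb : (0:ℝ) < α := hα
    have hble : α ≤ (r ^ 2 + α ^ 2) / α := by
      rw [le_div_iff₀ hα]; nlinarith
    have := Real.rpow_le_rpow_of_nonpos hα hble h2n
    exact mul_le_mul_of_nonneg_right this (Real.rpow_nonneg hr.le _)
  have hFnonneg : ∀ r : ℝ, 0 ≤ r → 0 ≤ F r := by
    intro r hr
    have : (0:ℝ) < (r ^ 2 + α ^ 2) / α := by positivity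
    exact mul_nonneg (Real.rpow_nonneg this.le _) (Real.rpow_nonneg hr _)
  have hFint : IntervalIntegrable F volume 0 ε := by
    refine hgint.mono_fun hFmeas.aestronglyMeasurable ?_
    filter_upwards [ae_restrict_mem measurableSet_uIoc] with r hr
    rw [Set.uIoc_of_le hε.le] at hr
    rw [Real.norm_eq_abs, Real.norm_eq_abs, abs_of_nonneg (hFnonneg r hr.1.le),
      abs_of_nonneg (mul_nonneg (Real.rpow_nonneg hα.le _) (Real.rpow_nonneg hr.1.le _))]
    exact hFle r hr.1
  have hFint1 : IntervalIntegrable F volume 0 α :=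
    hFint.mono_set' (by rw [Set.uIoc_of_le hε.le, Set.uIoc_of_le hα.le]; exact Set.Ioc_subset_Ioc le_rfl hαε.le)
  have hFint2 : IntervalIntegrable F volume α ε :=
    hFint.mono_set' (by rw [Set.uIoc_of_le hε.le, Set.uIoc_of_le hαε.le]; exact Set.Ioc_subset_Ioc hα.le le_rfl)
  have hsplit : (∫ r in (0:ℝ)..ε, F r) = (∫ r in (0:ℝ)..α, F r) + ∫ r in α..ε, F r :=
    (intervalIntegral.integral_add_adjacent_intervals hFint1 hFint2).symm
  -- power integral from 0
  have hzero : (0:ℝ) ^ (k + n - 1 + 1) = 0 := Real.zero_rpow (ne_of_gt (by linarith))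
  have hpow0 : (∫ r in (0:ℝ)..α, r ^ (k + n - 1)) = α ^ (k + n) / (k + n) := by
    rw [integral_rpow (Or.inl hp), hzero]
    norm_num
  -- === LOWER BOUND ===
  have hlowptw : ∀ r ∈ Set.Icc (0:ℝ) α, (2*α) ^ ((2:ℝ) - n) * r ^ (k + n - 1) ≤ F r := by
    intro r hr
    have hble : (r ^ 2 + α ^ 2) / α ≤ 2 * α := by
      rw [div_le_iff₀ hα]; nlinarith [hr.1, hr.2]
    have h1 := Real.rpow_le_rpow_of_nonpos (by positivity) hble h2n
    exact mul_le_mul_of_nonneg_right h1 (Real.rpow_nonneg hr.1 _)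
  have hlint : IntervalIntegrable (fun r : ℝ => (2*α) ^ ((2:ℝ) - n) * r ^ (k + n - 1))
      volume 0 α := (intervalIntegral.intervalIntegrable_rpow' hp).const_mul _
  have hlow1 : (2*α) ^ ((2:ℝ) - n) * (α ^ (k + n) / (k + n)) ≤ ∫ r in (0:ℝ)..α, F r := by
    have := intervalIntegral.integral_mono_on hα.le hlint hFint1 hlowptw
    rwa [intervalIntegral.integral_const_mul, hpow0] at this
  have hlow2 : (0:ℝ) ≤ ∫ r in α..ε, F r :=
    intervalIntegral.integral_nonneg hαε.le fun r hr => hFnonneg r (le_trans hα.le hr.1)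
  have hmul2 : (2*α) ^ ((2:ℝ) - n) = 2 ^ ((2:ℝ) - n) * α ^ ((2:ℝ) - n) :=
    Real.mul_rpow (by norm_num) hα.le
  have hαa : α ^ ((2:ℝ) - n) * α ^ (k + n) = α ^ (k + 2) := by
    rw [← Real.rpow_add hα]; congr 1; ring
  have hclow : 2 ^ ((2:ℝ) - n) / (k + n) * α ^ (k + 2)
      = (2*α) ^ ((2:ℝ) - n) * (α ^ (k + n) / (k + n)) := by
    rw [hmul2, ← hαa]; ring
  constructor
  · rw [hInt, hsplit, hclow]
    linarith
  -- === UPPER BOUND ===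
  · have hupptw1 : ∀ r ∈ Set.Icc (0:ℝ) α, F r ≤ α ^ ((2:ℝ) - n) * r ^ (k + n - 1) := by
      intro r hr
      rcases eq_or_lt_of_le hr.1 with h0 | h0
      · have h00 : ((0:ℝ) ^ 2 + α ^ 2) / α = α := by
          rw [zero_pow two_ne_zero, zero_add, sq, mul_div_assoc, div_self hα.ne', mul_one]
        simp only [hF, ← h0, h00, le_refl]
      · exact hFle r h0
    have hg1int : IntervalIntegrable (fun r : ℝ => α ^ ((2:ℝ) - n) * r ^ (k + n - 1))
        volume 0 α := (intervalIntegral.intervalIntegrable_rpow' hp).const_mul _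
    have hup1 : (∫ r in (0:ℝ)..α, F r) ≤ α ^ (k + 2) / (k + n) := by
      have := intervalIntegral.integral_mono_on hα.le hFint1 hg1int hupptw1
      rwa [intervalIntegral.integral_const_mul, hpow0, ← mul_div_assoc, hαa] at this
    -- second piece
    have hupptw2 : ∀ r ∈ Set.Icc α ε, F r ≤ α ^ ((n:ℝ) - 2) * r ^ (k + 3 - n) := by
      intro r hr
      have hr0 : (0:ℝ) < r := lt_of_lt_of_le hα hr.1
      have h1 : ((r ^ 2 + α ^ 2) / α) ^ ((2:ℝ) - n) ≤ (r ^ 2 / α) ^ ((2:ℝ) - n) :=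
        Real.rpow_le_rpow_of_nonpos (by positivity) (by gcongr <;> nlinarith) h2n
      have h2 : (r ^ 2 / α) ^ ((2:ℝ) - n) = r ^ (2 * ((2:ℝ) - n)) * α ^ ((n:ℝ) - 2) := by
        rw [Real.div_rpow (sq_nonneg r) hα.le, ← Real.rpow_natCast r 2,
          ← Real.rpow_mul hr0.le, div_eq_mul_inv, ← Real.rpow_neg hα.le]
        norm_num
      calc F r ≤ (r ^ (2 * ((2:ℝ) - n)) * α ^ ((n:ℝ) - 2)) * r ^ (k + n - 1) := by
            rw [← h2]; exact mul_le_mul_of_nonneg_right h1 (Real.rpow_nonneg hr0.le _)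
        _ = α ^ ((n:ℝ) - 2) * (r ^ (2 * ((2:ℝ) - n)) * r ^ (k + n - 1)) := by ring
        _ = α ^ ((n:ℝ) - 2) * r ^ (k + 3 - n) := by
            rw [← Real.rpow_add hr0]; congr 1; ring
    have hg2int : IntervalIntegrable (fun r : ℝ => α ^ ((n:ℝ) - 2) * r ^ (k + 3 - n))
        volume α ε := by
      apply ContinuousOn.intervalIntegrable
      apply ContinuousOn.mul continuousOn_const
      apply ContinuousOn.rpow_const continuousOn_id
      intro x hx
      rw [Set.uIcc_of_le hαε.le] at hx
      exact Or.inl (ne_of_gt (lt_of_lt_of_le hα hx.1))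
    have hq1 : k + 3 - n + 1 = -(((n:ℝ) - k - 4)) := by ring
    have hεq : (0:ℝ) ≤ ε ^ (k + 3 - n + 1) := Real.rpow_nonneg hε.le _
    have hup2 : (∫ r in α..ε, F r) ≤ α ^ (k + 2) / ((n:ℝ) - k - 4) := by
      have hm := intervalIntegral.integral_mono_on hαε.le hFint2 hg2int hupptw2
      rw [intervalIntegral.integral_const_mul,
        integral_rpow (Or.inr ⟨by intro h; rw [h] at hq1; linarith,
          by rw [Set.uIcc_of_le hαε.le]; intro h; exact absurd h.1 (not_le.mpr hα)⟩)] at hm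
      have heq : α ^ ((n:ℝ) - 2) *
          ((ε ^ (k + 3 - n + 1) - α ^ (k + 3 - n + 1)) / (k + 3 - n + 1))
          ≤ α ^ ((n:ℝ) - 2) * (α ^ (k + 3 - n + 1) / ((n:ℝ) - k - 4)) := by
        have hαn2 : (0:ℝ) ≤ α ^ ((n:ℝ) - 2) := Real.rpow_nonneg hα.le _
        apply mul_le_mul_of_nonneg_left _ hαn2
        rw [hq1, div_neg]
        have h1 : -((ε ^ (-((n:ℝ) - k - 4)) - α ^ (-((n:ℝ) - k - 4))) / ((n:ℝ) - k - 4))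
            = (α ^ (-((n:ℝ) - k - 4)) - ε ^ (-((n:ℝ) - k - 4))) / ((n:ℝ) - k - 4) := by ring
        rw [h1]
        have h2 : (0:ℝ) ≤ ε ^ (-((n:ℝ) - k - 4)) := Real.rpow_nonneg hε.le _
        exact (div_le_div_iff_of_pos_right hnk4).mpr (by linarith)
      have hfin : α ^ ((n:ℝ) - 2) * (α ^ (k + 3 - n + 1) / ((n:ℝ) - k - 4))
          = α ^ (k + 2) / ((n:ℝ) - k - 4) := by
        rw [← mul_div_assoc, ← Real.rpow_add hα]
        congr 2; ring
      calc (∫ r in α..ε, F r) ≤ _ := hm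
        _ ≤ _ := heq
        _ = _ := hfin
    rw [hInt, hsplit]
    have : (1 / (k + n) + 1 / ((n:ℝ) - k - 4)) * α ^ (k + 2)
        = α ^ (k + 2) / (k + n) + α ^ (k + 2) / ((n:ℝ) - k - 4) := by ring
    linarith
end

section
/- Let n ≥ 3, ε > 0 and u_α(r) = ((r² + α²)/α)^((2-n)/2). If k > -n and n = k + 4, then there exist constants 0 < c ≤ C such that for all sufficiently small α ∈ (0, 1/2), c·α^(k+2)·log(1/α) ≤ ∫₀^ε u_α(r)² r^(k+n-1) dr ≤ C·α^(k+2)·log(1/α). -/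
open MeasureTheory Real

/-!
Writing `t = r² / (r² + α²) ∈ [0, 1)`, the integrand for `k = n - 4` is
`α^(n-2) · t^(n-3) · r / (r² + α²)`, and `r / (r² + α²)` integrates to `½ log(r² + α²)`.
Bounding `t ≤ 1` on `[0, ε]` and `t ≥ ½` on `[α, ε]` squeezes the integral between multiples of
`α^(n-2) · log(ε / α)`, which is comparable to `α^(n-2) · log(1 / α)` once `α ≪ ε`.
-/

theorem integral_self_div_sq_add_sq {α : ℝ} (hα : α ≠ 0) (a b : ℝ) :
    ∫ r in a..b, r / (r ^ 2 + α ^ 2) = (log (b ^ 2 + α ^ 2) - log (a ^ 2 + α ^ 2)) / 2 := by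
  have hpos : ∀ r : ℝ, 0 < r ^ 2 + α ^ 2 := fun r => by positivity
  rw [intervalIntegral.integral_eq_sub_of_hasDerivAt (f := fun r => log (r ^ 2 + α ^ 2) / 2)]
  · ring
  · intro x _
    refine ((((hasDerivAt_pow 2 x).add_const (α ^ 2)).log (hpos x).ne').div_const 2).congr_deriv ?_
    push_cast
    field_simp
  · exact (continuous_id.div (by fun_prop) fun r => (hpos r).ne').intervalIntegrable a b

noncomputable def bubbleKernel (n : ℕ) (α r : ℝ) : ℝ :=
  α ^ (n - 2) * (r ^ 2 / (r ^ 2 + α ^ 2)) ^ (n - 3) * (r / (r ^ 2 + α ^ 2))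

theorem continuous_bubbleKernel (n : ℕ) {α : ℝ} (hα : α ≠ 0) : Continuous (bubbleKernel n α) := by
  have hne : ∀ r : ℝ, r ^ 2 + α ^ 2 ≠ 0 := fun r => by positivity
  unfold bubbleKernel
  exact (continuous_const.mul (((continuous_pow 2).div (by fun_prop) hne).pow _)).mul
    (continuous_id.div (by fun_prop) hne)

theorem bubble_integrand_eq {n : ℕ} (hn : 3 ≤ n) {k : ℝ} (hnk : (n : ℝ) = k + 4) {α r : ℝ}
    (hα : 0 < α) :
    (((r ^ 2 + α ^ 2) / α) ^ ((2 - (n : ℝ)) / 2)) ^ 2 * r ^ (k + n - 1) = bubbleKernel n α r := by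
  obtain ⟨p, rfl⟩ : ∃ p : ℕ, n = p + 3 := ⟨n - 3, by omega⟩
  have hx : 0 < (r ^ 2 + α ^ 2) / α := by positivity
  have hsq : (2 - ((p + 3 : ℕ) : ℝ)) / 2 * ((2 : ℕ) : ℝ) = -((p + 1 : ℕ) : ℝ) := by
    push_cast; ring
  have hexp : k + ((p + 3 : ℕ) : ℝ) - 1 = ((2 * p + 1 : ℕ) : ℝ) := by
    push_cast at hnk ⊢; linarith
  rw [← rpow_natCast _ 2, ← rpow_mul hx.le, hsq, rpow_neg hx.le, hexp, rpow_natCast,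
    rpow_natCast, bubbleKernel, show p + 3 - 2 = p + 1 by omega, show p + 3 - 3 = p by omega]
  have : r ^ 2 + α ^ 2 ≠ 0 := by positivity
  rw [div_pow, div_pow]
  field_simp
  ring

theorem bubbleKernel_nonneg (n : ℕ) {α r : ℝ} (hα : 0 ≤ α) (hr : 0 ≤ r) :
    0 ≤ bubbleKernel n α r := by
  unfold bubbleKernel
  positivity

theorem bubbleKernel_le (n : ℕ) {α r : ℝ} (hα : 0 ≤ α) (hr : 0 ≤ r) :
    bubbleKernel n α r ≤ α ^ (n - 2) * (r / (r ^ 2 + α ^ 2)) := by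
  have ht : r ^ 2 / (r ^ 2 + α ^ 2) ≤ 1 := div_le_one_of_le₀ (by nlinarith) (by positivity)
  exact mul_le_mul_of_nonneg_right
    (mul_le_of_le_one_right (by positivity) (pow_le_one₀ (by positivity) ht)) (by positivity)

theorem le_bubbleKernel (n : ℕ) {α r : ℝ} (hα : 0 < α) (hαr : α ≤ r) :
    α ^ (n - 2) / 2 ^ (n - 3) * (r / (r ^ 2 + α ^ 2)) ≤ bubbleKernel n α r := by
  have ht : 1 / 2 ≤ r ^ 2 / (r ^ 2 + α ^ 2) := by
    rw [div_le_div_iff₀ (by norm_num) (by positivity)]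
    nlinarith
  have hr : 0 ≤ r := hα.le.trans hαr
  unfold bubbleKernel
  rw [div_eq_mul_one_div, ← one_div_pow]
  gcongr

theorem integral_bubbleKernel_le (n : ℕ) {α ε : ℝ} (hα : 0 < α) (hε : 0 ≤ ε) :
    ∫ r in 0..ε, bubbleKernel n α r ≤ α ^ (n - 2) * ((log (ε ^ 2 + α ^ 2) - log (α ^ 2)) / 2) := by
  have hg : Continuous fun r : ℝ => α ^ (n - 2) * (r / (r ^ 2 + α ^ 2)) :=
    continuous_const.mul (continuous_id.div (by fun_prop) fun r => by positivity)
  calc ∫ r in 0..ε, bubbleKernel n α r ≤ ∫ r in 0..ε, α ^ (n - 2) * (r / (r ^ 2 + α ^ 2)) :=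
        intervalIntegral.integral_mono_on hε
          ((continuous_bubbleKernel n hα.ne').intervalIntegrable 0 ε) (hg.intervalIntegrable 0 ε)
          fun r hr => bubbleKernel_le n hα.le hr.1
    _ = _ := by
        rw [intervalIntegral.integral_const_mul, integral_self_div_sq_add_sq hα.ne',
          zero_pow two_ne_zero, zero_add]

theorem le_integral_bubbleKernel (n : ℕ) {α ε : ℝ} (hα : 0 < α) (hαε : α ≤ ε) :
    α ^ (n - 2) / 2 ^ (n - 3) * ((log (ε ^ 2 + α ^ 2) - log (2 * α ^ 2)) / 2)
      ≤ ∫ r in 0..ε, bubbleKernel n α r := by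
  have hK := continuous_bubbleKernel n hα.ne'
  have hg : Continuous fun r : ℝ => α ^ (n - 2) / 2 ^ (n - 3) * (r / (r ^ 2 + α ^ 2)) :=
    continuous_const.mul (continuous_id.div (by fun_prop) fun r => by positivity)
  calc α ^ (n - 2) / 2 ^ (n - 3) * ((log (ε ^ 2 + α ^ 2) - log (2 * α ^ 2)) / 2)
        = ∫ r in α..ε, α ^ (n - 2) / 2 ^ (n - 3) * (r / (r ^ 2 + α ^ 2)) := by
        rw [intervalIntegral.integral_const_mul, integral_self_div_sq_add_sq hα.ne', two_mul]
    _ ≤ ∫ r in α..ε, bubbleKernel n α r :=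
        intervalIntegral.integral_mono_on hαε (hg.intervalIntegrable α ε)
          (hK.intervalIntegrable α ε) fun r hr => le_bubbleKernel n hα hr.1
    _ ≤ ∫ r in 0..ε, bubbleKernel n α r :=
        intervalIntegral.integral_mono_interval hα.le hαε le_rfl
          ((ae_restrict_mem measurableSet_Ioc).mono fun r hr =>
            bubbleKernel_nonneg n hα.le hr.1.le)
          (hK.intervalIntegrable 0 ε)

theorem log_one_div_le_log_sq_add_sq_sub {α ε : ℝ} (hα : 0 < α) (hαε : α ≤ ε ^ 2 / 2) :
    log (1 / α) ≤ log (ε ^ 2 + α ^ 2) - log (2 * α ^ 2) := by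
  rw [← log_div (by positivity) (by positivity)]
  refine log_le_log (by positivity) ?_
  rw [div_le_div_iff₀ hα (by positivity)]
  nlinarith

theorem log_sq_add_sq_sub_le {α : ℝ} (ε : ℝ) (hα : 0 < α) (hα2 : α < 1 / 2) :
    (log (ε ^ 2 + α ^ 2) - log (α ^ 2)) / 2 ≤ (ε ^ 2 + 1) * log (1 / α) := by
  have hlog2 : 1 / 2 ≤ log (1 / α) :=
    calc (1 : ℝ) / 2 ≤ log 2 := by linarith [log_two_gt_d9]
      _ ≤ log (1 / α) := log_le_log two_pos (by rw [le_div_iff₀ hα]; linarith)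
  have hnum : log (ε ^ 2 + α ^ 2) ≤ ε ^ 2 := by
    have := log_le_sub_one_of_pos (show 0 < ε ^ 2 + α ^ 2 by positivity)
    nlinarith
  have hden : log (α ^ 2) = -2 * log (1 / α) := by
    rw [log_pow, one_div, log_inv]
    push_cast
    ring
  rw [hden]
  nlinarith [mul_nonneg (sq_nonneg ε) (sub_nonneg.2 hlog2)]

theorem bubble_integral_asymptotics_case_eq_general
    (n : ℕ) (hn : 3 ≤ n) (ε : ℝ) (hε : 0 < ε) (k : ℝ)
    (hnk : (n : ℝ) = k + 4)
    (u : ℝ → ℝ → ℝ)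
    (hu : ∀ α r, u α r = ((r ^ 2 + α ^ 2) / α) ^ ((2 - (n : ℝ)) / 2)) :
    ∃ c C : ℝ, 0 < c ∧ c ≤ C ∧ ∃ α₀ : ℝ, 0 < α₀ ∧ ∀ α : ℝ, 0 < α → α < 1 / 2 → α < α₀ →
      c * α ^ (k + 2) * Real.log (1 / α)
          ≤ (∫ r in (0:ℝ)..ε, (u α r) ^ 2 * r ^ (k + n - 1)) ∧
      (∫ r in (0:ℝ)..ε, (u α r) ^ 2 * r ^ (k + n - 1))
          ≤ C * α ^ (k + 2) * Real.log (1 / α) := by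
  have hc : (1 : ℝ) / 2 ^ (n - 2) ≤ 1 := div_le_one_of_le₀ (one_le_pow₀ one_le_two) (by positivity)
  refine ⟨1 / 2 ^ (n - 2), ε ^ 2 + 1, by positivity, by nlinarith, ε ^ 2 / 2, by positivity, ?_⟩
  intro α hα hα_half hαε
  have hα_le_ε : α ≤ ε := by nlinarith
  have hpow : α ^ (k + 2) = α ^ (n - 2) := by
    rw [← rpow_natCast, Nat.cast_sub (by omega)]
    congr 1
    push_cast
    linarith
  have hint : ∫ r in (0:ℝ)..ε, u α r ^ 2 * r ^ (k + n - 1) = ∫ r in (0:ℝ)..ε, bubbleKernel n α r :=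
    intervalIntegral.integral_congr fun r _ => by
      simp only [hu]
      exact bubble_integrand_eq hn hnk hα
  rw [hint, hpow]
  constructor
  · have h2 : (2 : ℝ) ^ (n - 2) = 2 ^ (n - 3) * 2 := by rw [← pow_succ]; congr 1; omega
    calc 1 / 2 ^ (n - 2) * α ^ (n - 2) * log (1 / α)
          = α ^ (n - 2) / 2 ^ (n - 3) * (log (1 / α) / 2) := by rw [h2]; ring
      _ ≤ α ^ (n - 2) / 2 ^ (n - 3) * ((log (ε ^ 2 + α ^ 2) - log (2 * α ^ 2)) / 2) := by
          gcongr
          exact log_one_div_le_log_sq_add_sq_sub hα hαε.le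
      _ ≤ _ := le_integral_bubbleKernel n hα hα_le_ε
  · calc _ ≤ α ^ (n - 2) * ((log (ε ^ 2 + α ^ 2) - log (α ^ 2)) / 2) :=
          integral_bubbleKernel_le n hα hε.le
      _ ≤ α ^ (n - 2) * ((ε ^ 2 + 1) * log (1 / α)) := by
          gcongr
          exact log_sq_add_sq_sub_le ε hα hα_half
      _ = _ := by ring

/-- Lee–Parker calculus lemma, case `n = k + 4`: the integral
`∫₀^ε u_α(r)² r^(k+n-1) dr` is comparable to `α^(k+2)·log(1/α)` for small `α`. -/
theorem bubble_integral_asymptotics_case_eq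
    (n : ℕ) (hn : 3 ≤ n) (ε : ℝ) (hε : 0 < ε) (k : ℝ) (hk : -(n : ℝ) < k)
    (hnk : (n : ℝ) = k + 4)
    (u : ℝ → ℝ → ℝ)
    (hu : ∀ α r, u α r = ((r ^ 2 + α ^ 2) / α) ^ ((2 - (n : ℝ)) / 2)) :
    ∃ c C : ℝ, 0 < c ∧ c ≤ C ∧ ∃ α₀ : ℝ, 0 < α₀ ∧ ∀ α : ℝ, 0 < α → α < 1 / 2 → α < α₀ →
      c * α ^ (k + 2) * Real.log (1 / α)
          ≤ (∫ r in (0:ℝ)..ε, (u α r) ^ 2 * r ^ (k + n - 1)) ∧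
      (∫ r in (0:ℝ)..ε, (u α r) ^ 2 * r ^ (k + n - 1))
          ≤ C * α ^ (k + 2) * Real.log (1 / α) :=
  bubble_integral_asymptotics_case_eq_general n hn ε hε k hnk u hu
end

section
/- Let n ≥ 3, ε > 0 and u_α(r) = ((r² + α²)/α)^((2-n)/2). If k > -n and n < k + 4, then there exist constants 0 < c ≤ C such that for all sufficiently small α > 0, c·α^(n-2) ≤ ∫₀^ε u_α(r)² r^(k+n-1) dr ≤ C·α^(n-2). -/
/-!
Squaring the bubble gives `u_α(r)² = α^(n-2) (r² + α²)^(2-n)`, so it suffices to bound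
`J(α) = ∫₀^ε (r² + α²)^(2-n) r^(k+n-1) dr` above and below by positive constants.
Since `2 - n ≤ 0`, on `[0, ε]` we have `(r² + α²)^(2-n) ≤ r^(4-2n)`, and on `[α, ε]` also
`(2r²)^(2-n) ≤ (r² + α²)^(2-n)`; both comparison integrands are multiples of `r^(p-1)` with
`p = k + 4 - n > 0`, which is integrable at `0`.
-/

open MeasureTheory Set

lemma sq_rpow_div_half {x α : ℝ} (hx : 0 ≤ x) (hα : 0 < α) (a : ℝ) :
    ((x / α) ^ (a / 2)) ^ 2 = α ^ (-a) * x ^ a := by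
  rw [← Real.rpow_natCast, ← Real.rpow_mul (div_nonneg hx hα.le), Real.div_rpow hx hα.le,
    Real.rpow_neg hα.le]
  norm_num
  ring

lemma sq_rpow_mul_rpow {r : ℝ} (hr : 0 < r) (a γ : ℝ) :
    (r ^ 2) ^ a * r ^ γ = r ^ (γ + 2 * a) := by
  rw [← Real.rpow_natCast, ← Real.rpow_mul hr.le, ← Real.rpow_add hr]
  norm_num
  ring_nf

section WeightedIntegral

variable {α ε a γ : ℝ}

lemma intervalIntegrable_sq_add_sq_rpow_mul_rpow (hα : α ≠ 0) (hγ : -1 < γ) (b c : ℝ) :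
    IntervalIntegrable (fun r : ℝ => (r ^ 2 + α ^ 2) ^ a * r ^ γ) volume b c := by
  refine (intervalIntegral.intervalIntegrable_rpow' hγ).continuousOn_mul ?_
  exact ContinuousOn.rpow_const (by fun_prop) fun r _ => Or.inl (by positivity)

lemma integral_sq_add_sq_rpow_mul_rpow_le (hα : α ≠ 0) (hε : 0 ≤ ε) (ha : a ≤ 0)
    (hp : 0 < γ + 2 * a + 1) :
    ∫ r in (0 : ℝ)..ε, (r ^ 2 + α ^ 2) ^ a * r ^ γ ≤
      ε ^ (γ + 2 * a + 1) / (γ + 2 * a + 1) := by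
  have hγ : -1 < γ + 2 * a := by linarith
  have hmono : ∫ r in (0 : ℝ)..ε, (r ^ 2 + α ^ 2) ^ a * r ^ γ ≤
      ∫ r in (0 : ℝ)..ε, r ^ (γ + 2 * a) := by
    refine intervalIntegral.integral_mono_ae_restrict hε
      (intervalIntegrable_sq_add_sq_rpow_mul_rpow hα (by linarith) 0 ε)
      (intervalIntegral.intervalIntegrable_rpow' hγ) ?_
    filter_upwards [ae_restrict_mem measurableSet_Icc,
      ae_restrict_of_ae (Measure.ae_ne volume (0 : ℝ))] with r hr hr0
    have hr : 0 < r := lt_of_le_of_ne hr.1 (Ne.symm hr0)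
    rw [← sq_rpow_mul_rpow hr]
    gcongr ?_ * _
    exact Real.rpow_le_rpow_of_nonpos (by positivity) (by nlinarith) ha
  rwa [integral_rpow (Or.inl hγ), Real.zero_rpow hp.ne', sub_zero] at hmono

lemma le_integral_sq_add_sq_rpow_mul_rpow (hα : 0 < α) (hαε : α ≤ ε) (ha : a ≤ 0)
    (hp : 0 < γ + 2 * a + 1) :
    2 ^ a * ((ε ^ (γ + 2 * a + 1) - α ^ (γ + 2 * a + 1)) / (γ + 2 * a + 1)) ≤
      ∫ r in (0 : ℝ)..ε, (r ^ 2 + α ^ 2) ^ a * r ^ γ := by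
  have hγ : -1 < γ + 2 * a := by linarith
  have hint :=
    intervalIntegrable_sq_add_sq_rpow_mul_rpow (a := a) hα.ne' (γ := γ) (by linarith)
  calc 2 ^ a * ((ε ^ (γ + 2 * a + 1) - α ^ (γ + 2 * a + 1)) / (γ + 2 * a + 1))
      = ∫ r in α..ε, 2 ^ a * r ^ (γ + 2 * a) := by
        rw [intervalIntegral.integral_const_mul, integral_rpow (Or.inl hγ)]
    _ ≤ ∫ r in α..ε, (r ^ 2 + α ^ 2) ^ a * r ^ γ := by
        refine intervalIntegral.integral_mono_on hαε
          ((intervalIntegral.intervalIntegrable_rpow' hγ).const_mul _) (hint α ε) fun r hr => ?_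
        have hr0 : 0 < r := hα.trans_le hr.1
        rw [← sq_rpow_mul_rpow hr0, ← mul_assoc,
          ← Real.mul_rpow (by norm_num) (by positivity)]
        gcongr ?_ * _
        exact Real.rpow_le_rpow_of_nonpos (by positivity) (by nlinarith [hr.1]) ha
    _ ≤ ∫ r in (0 : ℝ)..ε, (r ^ 2 + α ^ 2) ^ a * r ^ γ :=
        intervalIntegral.integral_mono_interval hα.le hαε le_rfl
          (ae_restrict_of_forall_mem measurableSet_Ioc fun r hr =>
            mul_nonneg (by positivity) (Real.rpow_nonneg hr.1.le _))
          (hint 0 ε)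

end WeightedIntegral

theorem bubble_integral_asymptotics_case_gt_general
    (n : ℕ) (hn : 3 ≤ n) (ε : ℝ) (hε : 0 < ε) (k : ℝ)
    (hnk : (n : ℝ) < k + 4)
    (u : ℝ → ℝ → ℝ)
    (hu : ∀ α r, u α r = ((r ^ 2 + α ^ 2) / α) ^ ((2 - (n : ℝ)) / 2)) :
    ∃ c C : ℝ, 0 < c ∧ c ≤ C ∧ ∃ α₀ : ℝ, 0 < α₀ ∧ ∀ α : ℝ, 0 < α → α < α₀ →
      c * α ^ ((n : ℝ) - 2) ≤ (∫ r in (0:ℝ)..ε, (u α r) ^ 2 * r ^ (k + n - 1)) ∧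
      (∫ r in (0:ℝ)..ε, (u α r) ^ 2 * r ^ (k + n - 1)) ≤ C * α ^ ((n : ℝ) - 2) := by
  have ha : 2 - (n : ℝ) ≤ 0 := by
    have : (3 : ℝ) ≤ n := by exact_mod_cast hn
    linarith
  set p := k + n - 1 + 2 * (2 - (n : ℝ)) + 1
  have hp : 0 < p := by linarith
  set J : ℝ → ℝ := fun α =>
    ∫ r in (0 : ℝ)..ε, (r ^ 2 + α ^ 2) ^ (2 - (n : ℝ)) * r ^ (k + n - 1)
  set c := 2 ^ (2 - (n : ℝ)) * ((ε ^ p - (ε / 2) ^ p) / p)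
  have hJ_le : ∀ α, 0 < α → J α ≤ ε ^ p / p := fun α hα =>
    integral_sq_add_sq_rpow_mul_rpow_le hα.ne' hε.le ha hp
  have hJ_ge : ∀ α, 0 < α → α ≤ ε / 2 → c ≤ J α := fun α hα hαε =>
    le_trans (by simp only [c]; gcongr)
      (le_integral_sq_add_sq_rpow_mul_rpow hα (by linarith) ha hp)
  have hI : ∀ α, 0 < α →
      ∫ r in (0 : ℝ)..ε, u α r ^ 2 * r ^ (k + n - 1) = J α * α ^ ((n : ℝ) - 2) := by
    intro α hα
    have hu_sq :
        ∀ r, u α r ^ 2 = α ^ ((n : ℝ) - 2) * (r ^ 2 + α ^ 2) ^ (2 - (n : ℝ)) :=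
      fun r => by rw [hu, sq_rpow_div_half (by positivity) hα, neg_sub]
    simp_rw [hu_sq, mul_assoc, intervalIntegral.integral_const_mul, J, mul_comm]
  have hc : 0 < c := by
    have : (ε / 2) ^ p < ε ^ p := Real.rpow_lt_rpow (by positivity) (by linarith) hp
    exact mul_pos (by positivity) (div_pos (by linarith) hp)
  have hcC : c ≤ ε ^ p / p :=
    (hJ_ge (ε / 4) (by positivity) (by linarith)).trans (hJ_le (ε / 4) (by positivity))
  refine ⟨c, ε ^ p / p, hc, hcC, ε / 2, by positivity, fun α hα hαε => ?_⟩
  rw [hI α hα]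
  exact ⟨by gcongr; exact hJ_ge α hα hαε.le, by gcongr; exact hJ_le α hα⟩

/-- Lee–Parker calculus lemma, case `n < k + 4`: the integral
`∫₀^ε u_α(r)² r^(k+n-1) dr` is comparable to `α^(n-2)` for small `α`. -/
theorem bubble_integral_asymptotics_case_gt
    (n : ℕ) (hn : 3 ≤ n) (ε : ℝ) (hε : 0 < ε) (k : ℝ) (hk : -(n : ℝ) < k)
    (hnk : (n : ℝ) < k + 4)
    (u : ℝ → ℝ → ℝ)
    (hu : ∀ α r, u α r = ((r ^ 2 + α ^ 2) / α) ^ ((2 - (n : ℝ)) / 2)) :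
    ∃ c C : ℝ, 0 < c ∧ c ≤ C ∧ ∃ α₀ : ℝ, 0 < α₀ ∧ ∀ α : ℝ, 0 < α → α < α₀ →
      c * α ^ ((n : ℝ) - 2) ≤ (∫ r in (0:ℝ)..ε, (u α r) ^ 2 * r ^ (k + n - 1)) ∧
      (∫ r in (0:ℝ)..ε, (u α r) ^ 2 * r ^ (k + n - 1)) ≤ C * α ^ ((n : ℝ) - 2) :=
  bubble_integral_asymptotics_case_gt_general n hn ε hε k hnk u hu
end
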